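/- For every a ∈ ℝ^{p+1} (that is, a ∈ span_ℝ(v₀, v₁, …, v_p) ⊆ M), every ω ∈ 𝕊, and every b ∈ 𝔸, it holds that a(ωb) = ω(a^c b). -/
import Mathlib


open scoped BigOperators
open Filter Topology

namespace GPSM

variable (A : Type*) [NormedAddCommGroup A] [NormedSpace ℝ A] [Mul A] [One A]

/-- `A` is a real alternative algebra with unit `1`, of finite dimension `d > 1`,
equipped with an anti-involution `conj` (a real-linear map with `(a^c)^c = a`,
`(ab)^c = b^c a^c`, fixing the reals).  The associator is alternating (left/right
alternative laws). -/
structure IsAltStarAlg (conj : A → A) : Prop where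
  finDim : FiniteDimensional ℝ A
  one_lt_finrank : 1 < Module.finrank ℝ A
  mul_add' : ∀ a b c : A, a * (b + c) = a * b + a * c
  add_mul' : ∀ a b c : A, (a + b) * c = a * c + b * c
  smul_mul' : ∀ (r : ℝ) (a b : A), (r • a) * b = r • (a * b)
  mul_smul' : ∀ (r : ℝ) (a b : A), a * (r • b) = r • (a * b)
  one_mul' : ∀ a : A, 1 * a = a
  mul_one' : ∀ a : A, a * 1 = a
  alt_left : ∀ a b : A, a * (a * b) = a * a * b
  alt_right : ∀ a b : A, a * b * b = a * (b * b)
  conj_add : ∀ a b : A, conj (a + b) = conj a + conj b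
  conj_smul : ∀ (r : ℝ) (a : A), conj (r • a) = r • conj a
  conj_conj : ∀ a : A, conj (conj a) = a
  conj_mul : ∀ a b : A, conj (a * b) = conj b * conj a
  conj_one : conj 1 = 1

/-- `v 0, v 1, …, v m` is a hypercomplex basis of the hypercomplex subspace
`M = span(v 0, …, v m)` of `A`: `v 0 = 1`, `t(v s) = 0`, `n(v s) = 1`, the `v s`
anticommute for distinct `s, t ∈ {1,…,m}`, they are linearly independent, and
`M` is contained in the quadratic cone `Q_A`. -/
structure IsHypBasis (conj : A → A) (v : ℕ → A) (m : ℕ) : Prop where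
  v_zero : v 0 = 1
  trace_zero : ∀ s, 1 ≤ s → s ≤ m → v s + conj (v s) = 0
  norm_one : ∀ s, 1 ≤ s → s ≤ m → v s * conj (v s) = 1
  anticomm : ∀ s t, 1 ≤ s → s ≤ m → 1 ≤ t → t ≤ m → s ≠ t → v s * v t = -(v t * v s)
  indep : LinearIndependent ℝ (fun i : Fin (m + 1) => v i)
  mem_cone : ∀ x ∈ Submodule.span ℝ (Set.range fun i : Fin (m + 1) => v (i : ℕ)),
      ∃ tr nr : ℝ, x + conj x = tr • (1 : A) ∧ x * conj x = nr • (1 : A) ∧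
        ((∃ r : ℝ, x = r • (1 : A)) ∨ tr ^ 2 < 4 * nr)

variable {A}

/-- Identification of `ℝ^{m+1}` with the hypercomplex subspace `M`:
`(x_0,…,x_m) ↦ Σ x_s • v s`. -/
def emb (v : ℕ → A) (m : ℕ) (x : Fin (m + 1) → ℝ) : A :=
  ∑ s : Fin (m + 1), x s • v (s : ℕ)

/-- First `p+1` coordinates of a point of `M ≅ ℝ^{m+1}`, i.e. the `x_p`-part. -/
def projP (m p : ℕ) (x : Fin (m + 1) → ℝ) : Fin (p + 1) → ℝ := fun s =>
  if h : (s : ℕ) < m + 1 then x ⟨(s : ℕ), h⟩ else 0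

/-- Inclusion `ℝ^{p+1} ⊆ ℝ^{m+1}` (remaining coordinates `0`). -/
def injP (m p : ℕ) (y : Fin (p + 1) → ℝ) : Fin (m + 1) → ℝ := fun s =>
  if h : (s : ℕ) < p + 1 then y ⟨(s : ℕ), h⟩ else 0

/-- The coordinates of `x_q` (last `q = m - p` coordinates of `x`). -/
def xqpart (m p : ℕ) (x : Fin (m + 1) → ℝ) : Fin (m + 1) → ℝ := fun s =>
  if (s : ℕ) ≤ p then 0 else x s

/-- The coordinates of `x_p` inside `ℝ^{m+1}`. -/
def xppart (m p : ℕ) (x : Fin (m + 1) → ℝ) : Fin (m + 1) → ℝ := fun s =>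
  if (s : ℕ) ≤ p then x s else 0

/-- `r = |x_q|`. -/
noncomputable def rad (m p : ℕ) (x : Fin (m + 1) → ℝ) : ℝ :=
  Real.sqrt (∑ s : Fin (m + 1), (xqpart m p x s) ^ 2)

/-- `ω = x_q / |x_q|` (coordinates), `0` when `x_q = 0`. -/
noncomputable def normq (m p : ℕ) (x : Fin (m + 1) → ℝ) : Fin (m + 1) → ℝ :=
  (rad m p x)⁻¹ • xqpart m p x

/-- The reflection `x = x_p + x_q ↦ x_⋄ = x_p - x_q`. -/
def reflP (m p : ℕ) (x : Fin (m + 1) → ℝ) : Fin (m + 1) → ℝ := fun s =>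
  if (s : ℕ) ≤ p then x s else -x s

/-- The sphere `𝕊 = {x_q ∈ span(v_{p+1},…,v_m) : x_q² = -1}`, in coordinates. -/
def Sph (v : ℕ → A) (m p : ℕ) : Set (Fin (m + 1) → ℝ) :=
  {w | (∀ s : Fin (m + 1), (s : ℕ) ≤ p → w s = 0) ∧ emb v m w * emb v m w = -1}

/-- The point `x_p + r ω` of `M ≅ ℝ^{m+1}`. -/
def pt (m p : ℕ) (w : Fin (m + 1) → ℝ) (y : Fin (p + 1) → ℝ) (r : ℝ) :
    Fin (m + 1) → ℝ :=
  injP m p y + r • w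

/-- The slice `Ω_ω ⊆ ℝ^{p+2}` of `Ω` at `ω`. -/
def sliceSet (m p : ℕ) (Ω : Set (Fin (m + 1) → ℝ)) (w : Fin (m + 1) → ℝ) :
    Set ((Fin (p + 1) → ℝ) × ℝ) := {z | pt m p w z.1 z.2 ∈ Ω}

/-- The restriction `f_ω` of `f` to the slice at `ω`, as a function on `ℝ^{p+2}`. -/
def sliceFun (m p : ℕ) (f : (Fin (m + 1) → ℝ) → A) (w : Fin (m + 1) → ℝ) :
    (Fin (p + 1) → ℝ) × ℝ → A := fun z => f (pt m p w z.1 z.2)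

/-- Partial derivative `∂_{x_s}` of a function on `ℝ^{m+1}`. -/
noncomputable def pdF (m : ℕ) (s : Fin (m + 1)) (f : (Fin (m + 1) → ℝ) → A)
    (x : Fin (m + 1) → ℝ) : A := fderiv ℝ f x (Pi.single s 1)

/-- Partial derivative `∂_{x_s}` of a function on `ℝ^{p+1}`. -/
noncomputable def pdP (p : ℕ) (s : Fin (p + 1)) (g : (Fin (p + 1) → ℝ) → A)
    (y : Fin (p + 1) → ℝ) : A := fderiv ℝ g y (Pi.single s 1)

/-- Partial derivative `∂_{x_s}` of a function on `ℝ^{p+2} = ℝ^{p+1} × ℝ`. -/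
noncomputable def pdSx (p : ℕ) (s : Fin (p + 1)) (G : (Fin (p + 1) → ℝ) × ℝ → A)
    (z : (Fin (p + 1) → ℝ) × ℝ) : A := fderiv ℝ G z (Pi.single s 1, 0)

/-- Partial derivative `∂_r` of a function on `ℝ^{p+2} = ℝ^{p+1} × ℝ`. -/
noncomputable def pdSr (p : ℕ) (G : (Fin (p + 1) → ℝ) × ℝ → A)
    (z : (Fin (p + 1) → ℝ) × ℝ) : A := fderiv ℝ G z (0, 1)

/-- Second partial derivative `∂_r²`. -/
noncomputable def pdSr2 (p : ℕ) (G : (Fin (p + 1) → ℝ) × ℝ → A)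
    (z : (Fin (p + 1) → ℝ) × ℝ) : A := pdSr p (pdSr p G) z

/-- The operator `Σ_{lo ≤ s ≤ hi} v_s ∂_{x_s}` on functions on `ℝ^{m+1}`.
`Dop v m 0 p` is `D_{x_p}`, `Dop v m (p+1) m` is `D_{x_q}`, `Dop v m 0 m` is `D_x`. -/
noncomputable def Dop (v : ℕ → A) (m lo hi : ℕ) (f : (Fin (m + 1) → ℝ) → A)
    (x : Fin (m + 1) → ℝ) : A :=
  ∑ s : Fin (m + 1), if lo ≤ (s : ℕ) ∧ (s : ℕ) ≤ hi then v (s : ℕ) * pdF m s f x else 0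

/-- The conjugate operator `∂_{x_0} - Σ_{1 ≤ s ≤ hi} v_s ∂_{x_s}` on functions on
`ℝ^{m+1}`; `Dbarop v m p` is `D̄_{x_p}`, `Dbarop v m m` is `D̄_x`. -/
noncomputable def Dbarop (v : ℕ → A) (m hi : ℕ) (f : (Fin (m + 1) → ℝ) → A)
    (x : Fin (m + 1) → ℝ) : A :=
  pdF m 0 f x -
    ∑ s : Fin (m + 1), if 1 ≤ (s : ℕ) ∧ (s : ℕ) ≤ hi then v (s : ℕ) * pdF m s f x else 0

/-- The operator `D_{x_p} = Σ_{s=0}^p v_s ∂_{x_s}` on functions on `ℝ^{p+1}`. -/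
noncomputable def DopP (v : ℕ → A) (p : ℕ) (g : (Fin (p + 1) → ℝ) → A)
    (y : Fin (p + 1) → ℝ) : A :=
  ∑ s : Fin (p + 1), v (s : ℕ) * pdP p s g y

/-- The operator `D̄_{x_p} = ∂_{x_0} - Σ_{s=1}^p v_s ∂_{x_s}` on functions on `ℝ^{p+1}`. -/
noncomputable def DbaropP (v : ℕ → A) (p : ℕ) (g : (Fin (p + 1) → ℝ) → A)
    (y : Fin (p + 1) → ℝ) : A :=
  pdP p 0 g y - ∑ s : Fin (p + 1), if 1 ≤ (s : ℕ) then v (s : ℕ) * pdP p s g y else 0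

/-- The operator `D_{x_p}` on functions on `ℝ^{p+2} = ℝ^{p+1} × ℝ`. -/
noncomputable def DopSx (v : ℕ → A) (p : ℕ) (G : (Fin (p + 1) → ℝ) × ℝ → A)
    (z : (Fin (p + 1) → ℝ) × ℝ) : A :=
  ∑ s : Fin (p + 1), v (s : ℕ) * pdSx p s G z

/-- The operator `D̄_{x_p}` on functions on `ℝ^{p+2} = ℝ^{p+1} × ℝ`. -/
noncomputable def DbaropSx (v : ℕ → A) (p : ℕ) (G : (Fin (p + 1) → ℝ) × ℝ → A)
    (z : (Fin (p + 1) → ℝ) × ℝ) : A :=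
  pdSx p 0 G z - ∑ s : Fin (p + 1), if 1 ≤ (s : ℕ) then v (s : ℕ) * pdSx p s G z else 0

/-- The Laplacian `Δ_x` on functions on `ℝ^{m+1}`. -/
noncomputable def lapF (m : ℕ) (f : (Fin (m + 1) → ℝ) → A)
    (x : Fin (m + 1) → ℝ) : A :=
  ∑ s : Fin (m + 1), pdF m s (pdF m s f) x

/-- The Laplacian `Δ_{x_p}` on functions on `ℝ^{p+1}`. -/
noncomputable def lapP (p : ℕ) (g : (Fin (p + 1) → ℝ) → A)
    (y : Fin (p + 1) → ℝ) : A :=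
  ∑ s : Fin (p + 1), pdP p s (pdP p s g) y

/-- Iterated Laplacian `Δ_x^k`. -/
noncomputable def lapIterF (m k : ℕ) (f : (Fin (m + 1) → ℝ) → A) :
    (Fin (m + 1) → ℝ) → A :=
  (fun g => lapF m g)^[k] f

/-- Iterated Laplacian `Δ_{x_p}^k`. -/
noncomputable def lapIterP (p k : ℕ) (g : (Fin (p + 1) → ℝ) → A) :
    (Fin (p + 1) → ℝ) → A :=
  (fun h => lapP p h)^[k] g

/-- The Laplacian `Δ_{x'} = Δ_{x_p} + ∂_r²` on functions on `ℝ^{p+2}`. -/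
noncomputable def lapSx (p : ℕ) (G : (Fin (p + 1) → ℝ) × ℝ → A)
    (z : (Fin (p + 1) → ℝ) × ℝ) : A :=
  (∑ s : Fin (p + 1), pdSx p s (pdSx p s G) z) + pdSr2 p G z

/-- The slice Cauchy-Riemann operator `D_ω = D_{x_p} + ω ∂_r` applied to a function
on `ℝ^{p+2}`, where `ω` is given in coordinates by `w`. -/
noncomputable def DomCR (v : ℕ → A) (m p : ℕ) (w : Fin (m + 1) → ℝ)
    (G : (Fin (p + 1) → ℝ) × ℝ → A) (z : (Fin (p + 1) → ℝ) × ℝ) : A :=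
  DopSx v p G z + emb v m w * pdSr p G z

/-- `f` is left generalized partial-slice monogenic (of type `(p, m-p)`) on `Ω`. -/
def GSM (v : ℕ → A) (m p : ℕ) (f : (Fin (m + 1) → ℝ) → A)
    (Ω : Set (Fin (m + 1) → ℝ)) : Prop :=
  ∀ w ∈ Sph v m p, ContDiffOn ℝ 1 (sliceFun m p f w) (sliceSet m p Ω w) ∧
    ∀ z ∈ sliceSet m p Ω w, DomCR v m p w (sliceFun m p f w) z = 0

/-- `Ω` is partially symmetric with respect to `ℝ^{p+1}`. -/
def PSym (v : ℕ → A) (m p : ℕ) (Ω : Set (Fin (m + 1) → ℝ)) : Prop :=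
  ∀ x ∈ Ω, ∀ w ∈ Sph v m p, xppart m p x + rad m p x • w ∈ Ω

/-- `Ω` is a slice domain: a domain meeting `ℝ^{p+1}` all of whose slices are
domains in `ℝ^{p+2}`. -/
def SliceDomain (v : ℕ → A) (m p : ℕ) (Ω : Set (Fin (m + 1) → ℝ)) : Prop :=
  IsOpen Ω ∧ IsConnected Ω ∧ (∃ x ∈ Ω, xqpart m p x = 0) ∧
    ∀ w ∈ Sph v m p, IsConnected (sliceSet m p Ω w)

/-- The reflection `(x_p, r) ↦ (x_p, -r)` of `ℝ^{p+2}`. -/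
def reflD (p : ℕ) (z : (Fin (p + 1) → ℝ) × ℝ) : (Fin (p + 1) → ℝ) × ℝ := (z.1, -z.2)

/-- The p-symmetric completion `Ω_D ⊆ M` of `D ⊆ ℝ^{p+2}`. -/
def OmegaD (v : ℕ → A) (m p : ℕ) (D : Set ((Fin (p + 1) → ℝ) × ℝ)) :
    Set (Fin (m + 1) → ℝ) :=
  {x | ∃ w ∈ Sph v m p, ∃ z ∈ D, x = pt m p w z.1 z.2}

/-- `(F₁, F₂)` satisfies the even-odd (stem function) conditions on `D`. -/
def IsStem (p : ℕ) (D : Set ((Fin (p + 1) → ℝ) × ℝ))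
    (F₁ F₂ : (Fin (p + 1) → ℝ) × ℝ → A) : Prop :=
  ∀ z ∈ D, F₁ (reflD p z) = F₁ z ∧ F₂ (reflD p z) = -F₂ z

/-- `f` is the generalized partial-slice function induced by the stem `(F₁, F₂)`:
`f(x_p + rω) = F₁(x_p, r) + ω F₂(x_p, r)`. -/
def Induced (v : ℕ → A) (m p : ℕ) (D : Set ((Fin (p + 1) → ℝ) × ℝ))
    (F₁ F₂ : (Fin (p + 1) → ℝ) × ℝ → A) (f : (Fin (m + 1) → ℝ) → A) : Prop :=
  ∀ w ∈ Sph v m p, ∀ z ∈ D, f (pt m p w z.1 z.2) = F₁ z + emb v m w * F₂ z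

/-- The generalized Cauchy-Riemann system for the stem `(F₁, F₂)` on `D`. -/
def StemCR (v : ℕ → A) (p : ℕ) (D : Set ((Fin (p + 1) → ℝ) × ℝ))
    (F₁ F₂ : (Fin (p + 1) → ℝ) × ℝ → A) : Prop :=
  ∀ z ∈ D, DopSx v p F₁ z - pdSr p F₂ z = 0 ∧ DbaropSx v p F₂ z + pdSr p F₁ z = 0

/-- `f` is generalized partial-slice regular on `Ω_D`. -/
def MemGSR (v : ℕ → A) (m p : ℕ) (D : Set ((Fin (p + 1) → ℝ) × ℝ))
    (f : (Fin (m + 1) → ℝ) → A) : Prop :=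
  ∃ F₁ F₂ : (Fin (p + 1) → ℝ) × ℝ → A, IsStem p D F₁ F₂ ∧
    ContDiffOn ℝ 1 F₁ D ∧ ContDiffOn ℝ 1 F₂ D ∧
    Induced v m p D F₁ F₂ f ∧ StemCR v p D F₁ F₂

/-- `f` is a generalized partial-slice function on `Ω`. -/
def MemGS (v : ℕ → A) (m p : ℕ) (Ω : Set (Fin (m + 1) → ℝ))
    (f : (Fin (m + 1) → ℝ) → A) : Prop :=
  ∃ F₁ F₂ : (Fin (p + 1) → ℝ) × ℝ → A,
    (∀ z : (Fin (p + 1) → ℝ) × ℝ, F₁ (reflD p z) = F₁ z ∧ F₂ (reflD p z) = -F₂ z) ∧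
    ∀ x ∈ Ω, f x = F₁ (projP m p x, rad m p x) +
      emb v m (normq m p x) * F₂ (projP m p x, rad m p x)

/-- Non-associative power: `a^n` with products taken from the right. -/
def apow (a : A) (n : ℕ) : A := (fun b => a * b)^[n] 1

/-- Partial even part `PE[f](x) = (f(x) + f(x_⋄))/2`. -/
noncomputable def PE (m p : ℕ) (f : (Fin (m + 1) → ℝ) → A)
    (x : Fin (m + 1) → ℝ) : A := (2 : ℝ)⁻¹ • (f x + f (reflP m p x))

/-- Partial odd part `PO[f](x) = (f(x) - f(x_⋄))/2`. -/
noncomputable def PO (m p : ℕ) (f : (Fin (m + 1) → ℝ) → A)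
    (x : Fin (m + 1) → ℝ) : A := (2 : ℝ)⁻¹ • (f x - f (reflP m p x))

/-- `Ω₀* = {x_p + x_q : x_p ∈ Ω₀, x_q ∈ ℝ^q}`. -/
def Omega0star (m p : ℕ) (Ω₀ : Set (Fin (p + 1) → ℝ)) : Set (Fin (m + 1) → ℝ) :=
  {x | projP m p x ∈ Ω₀}

/-- The spherical derivative `f'_s(x) = (1/2) x_q⁻¹ (f(x) - f(x_⋄))`
(using `x_q⁻¹ = -x_q/|x_q|²`). -/
noncomputable def sder (v : ℕ → A) (m p : ℕ) (f : (Fin (m + 1) → ℝ) → A)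
    (x : Fin (m + 1) → ℝ) : A :=
  -(((2 : ℝ) * rad m p x ^ 2)⁻¹) • (emb v m (xqpart m p x) * (f x - f (reflP m p x)))

/-- The spherical Dirac operator
`Γ f = -(1/2) Σ_{p+1 ≤ i,j ≤ m} v_i (v_j (L_{ij} f))`. -/
noncomputable def sphericalGamma (v : ℕ → A) (m p : ℕ) (f : (Fin (m + 1) → ℝ) → A)
    (x : Fin (m + 1) → ℝ) : A :=
  -((2 : ℝ)⁻¹) • ∑ i : Fin (m + 1), ∑ j : Fin (m + 1),
    if p < (i : ℕ) ∧ p < (j : ℕ) then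
      v (i : ℕ) * (v (j : ℕ) * (x i • pdF m j f x - x j • pdF m i f x)) else 0

/-- The slice Cauchy-Riemann operator `D_ω` applied to (the slice restriction of) a
function `f` on `M`, at the point `x` (with `ω = x_q/|x_q|`). -/
noncomputable def DomCRat (v : ℕ → A) (m p : ℕ) (f : (Fin (m + 1) → ℝ) → A)
    (x : Fin (m + 1) → ℝ) : A :=
  DomCR v m p (normq m p x) (sliceFun m p f (normq m p x)) (projP m p x, rad m p x)

/-- `f` is left monogenic on `Ω`: `f ∈ C¹` and `D_x f = 0`. -/
def Monogenic (v : ℕ → A) (m : ℕ) (f : (Fin (m + 1) → ℝ) → A)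
    (Ω : Set (Fin (m + 1) → ℝ)) : Prop :=
  ContDiffOn ℝ 1 f Ω ∧ ∀ x ∈ Ω, Dop v m 0 m f x = 0

/-- `f` is harmonic on `Ω`: `f ∈ C²` and `Δ_x f = 0`. -/
def Harmonic (m : ℕ) (f : (Fin (m + 1) → ℝ) → A)
    (Ω : Set (Fin (m + 1) → ℝ)) : Prop :=
  ContDiffOn ℝ 2 f Ω ∧ ∀ x ∈ Ω, lapF m f x = 0

/-- A family of functions converges normally (locally a summable uniform bound). -/
def NormallyConvOn {E F : Type*} [TopologicalSpace E] [NormedAddCommGroup F]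
    (u : ℕ → E → F) (s : Set E) : Prop :=
  ∀ x ∈ s, ∃ U ∈ nhds x, ∃ c : ℕ → ℝ, Summable c ∧ ∀ k : ℕ, ∀ y ∈ U, ‖u k y‖ ≤ c k

/-- The generalized partial-slice CK-extension
`CK[f₀](x) = Σ_k (r^{2k}/(2k)!)(-Δ_{x_p})^k f₀(x_p)
  + ω Σ_k (r^{2k+1}/(2k+1)!)(-Δ_{x_p})^k (D_{x_p} f₀)(x_p)`. -/
noncomputable def CKe (v : ℕ → A) (m p : ℕ) (f₀ : (Fin (p + 1) → ℝ) → A)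
    (x : Fin (m + 1) → ℝ) : A :=
  (∑' k : ℕ, (((-1 : ℝ) ^ k * rad m p x ^ (2 * k)) / (2 * k).factorial) •
      lapIterP p k f₀ (projP m p x)) +
  emb v m (normq m p x) *
    ∑' k : ℕ, (((-1 : ℝ) ^ k * rad m p x ^ (2 * k + 1)) / (2 * k + 1).factorial) •
      lapIterP p k (DopP v p f₀) (projP m p x)

/-- The coefficient `Γ(q/2)(-1)^k r^{2k} / (2^{2k} k! Γ(k + q/2))`. -/
noncomputable def hgckC (q k : ℕ) (r : ℝ) : ℝ :=
  (Real.Gamma ((q : ℝ) / 2) * (-1) ^ k * r ^ (2 * k)) /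
    (2 ^ (2 * k) * (k.factorial : ℝ) * Real.Gamma ((k : ℝ) + (q : ℝ) / 2))

/-- The coefficient `Γ(q/2)(-1)^k r^{2k} / (2^{2k+1} k! Γ(k + q/2 + 1))`. -/
noncomputable def gckC' (q k : ℕ) (r : ℝ) : ℝ :=
  (Real.Gamma ((q : ℝ) / 2) * (-1) ^ k * r ^ (2 * k)) /
    (2 ^ (2 * k + 1) * (k.factorial : ℝ) * Real.Gamma ((k : ℝ) + (q : ℝ) / 2 + 1))

/-- The coefficient `Γ(q/2 + 1)(-1)^k r^{2k} / (2^{2k} k! Γ(k + q/2 + 1))`. -/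
noncomputable def hgckC' (q k : ℕ) (r : ℝ) : ℝ :=
  (Real.Gamma ((q : ℝ) / 2 + 1) * (-1) ^ k * r ^ (2 * k)) /
    (2 ^ (2 * k) * (k.factorial : ℝ) * Real.Gamma ((k : ℝ) + (q : ℝ) / 2 + 1))

/-- The monogenic generalized CK-extension `GCK[A₀]`. -/
noncomputable def GCKe (v : ℕ → A) (m p : ℕ) (A₀ : (Fin (p + 1) → ℝ) → A)
    (x : Fin (m + 1) → ℝ) : A :=
  (∑' k : ℕ, hgckC (m - p) k (rad m p x) • lapIterP p k A₀ (projP m p x)) +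
  emb v m (xqpart m p x) *
    ∑' k : ℕ, gckC' (m - p) k (rad m p x) • lapIterP p k (DopP v p A₀) (projP m p x)

/-- The harmonic generalized CK-extension `HGCK[A₀, A₁]`. -/
noncomputable def HGCKe (v : ℕ → A) (m p : ℕ) (A₀ A₁ : (Fin (p + 1) → ℝ) → A)
    (x : Fin (m + 1) → ℝ) : A :=
  (∑' k : ℕ, hgckC (m - p) k (rad m p x) • lapIterP p k A₀ (projP m p x)) +
  emb v m (xqpart m p x) *
    ∑' k : ℕ, hgckC' (m - p) k (rad m p x) • lapIterP p k A₁ (projP m p x)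

/-- The operator `(1/r)∂_r`, extended to `r = 0` by its limit `∂_r²` (on even
functions). -/
noncomputable def T1 (p : ℕ) (G : (Fin (p + 1) → ℝ) × ℝ → A) :
    (Fin (p + 1) → ℝ) × ℝ → A := fun z =>
  if z.2 = 0 then pdSr2 p G z else (z.2)⁻¹ • pdSr p G z

/-- The operator `∂_r ∘ (1/r)`, extended to `r = 0` by its limit `(1/2)∂_r²` (on odd
functions). -/
noncomputable def T2 (p : ℕ) (G : (Fin (p + 1) → ℝ) × ℝ → A) :
    (Fin (p + 1) → ℝ) × ℝ → A := fun z =>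
  if z.2 = 0 then (2 : ℝ)⁻¹ • pdSr2 p G z
  else fderiv ℝ (fun t : ℝ => t⁻¹ • G (z.1, t)) z.2 1

/-- `C_q(k) = (q-1)(q-3)⋯(q-2k+1)`, `C_q(0) = 1`. -/
noncomputable def cq (q k : ℕ) : ℝ :=
  ∏ i ∈ Finset.range k, ((q : ℝ) - (2 * (i : ℝ) + 1))

/-- Double factorial. -/
def dfac : ℕ → ℕ
  | 0 => 1
  | 1 => 1
  | n + 2 => (n + 2) * dfac n

/-- The Fueter-Sce constant `γ_q = (-1)^{(q-1)/2} (q-1)!!/(q-2)!!`. -/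
noncomputable def gammaQ (q : ℕ) : ℝ :=
  (-1 : ℝ) ^ ((q - 1) / 2) * (dfac (q - 1) : ℝ) / (dfac (q - 2) : ℝ)


section Aux

variable {A : Type*} [NormedAddCommGroup A] [NormedSpace ℝ A] [Mul A] [One A]
  {conj : A → A}

lemma aux_mul_zero (H : IsAltStarAlg A conj) (a : A) : a * 0 = 0 := by
  calc a * 0 = a * ((0 : ℝ) • (0 : A)) := by rw [zero_smul]
    _ = (0 : ℝ) • (a * 0) := H.mul_smul' 0 a 0
    _ = 0 := zero_smul _ _

lemma aux_zero_mul (H : IsAltStarAlg A conj) (a : A) : 0 * a = 0 := by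
  calc (0 : A) * a = ((0 : ℝ) • (0 : A)) * a := by rw [zero_smul]
    _ = (0 : ℝ) • ((0 : A) * a) := H.smul_mul' 0 0 a
    _ = 0 := zero_smul _ _

lemma aux_mul_neg (H : IsAltStarAlg A conj) (a b : A) : a * (-b) = -(a * b) := by
  rw [← neg_one_smul ℝ b, H.mul_smul', neg_one_smul]

lemma aux_neg_mul (H : IsAltStarAlg A conj) (a b : A) : (-a) * b = -(a * b) := by
  rw [← neg_one_smul ℝ a, H.smul_mul', neg_one_smul]

lemma aux_mul_sum (H : IsAltStarAlg A conj) {ι : Type*} (t : Finset ι)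
    (f : ι → A) (a : A) : a * (∑ i ∈ t, f i) = ∑ i ∈ t, a * f i := by
  induction t using Finset.cons_induction with
  | empty => simpa using aux_mul_zero H a
  | cons i t hi ih => rw [Finset.sum_cons, Finset.sum_cons, H.mul_add', ih]

lemma aux_sum_mul (H : IsAltStarAlg A conj) {ι : Type*} (t : Finset ι)
    (f : ι → A) (a : A) : (∑ i ∈ t, f i) * a = ∑ i ∈ t, f i * a := by
  induction t using Finset.cons_induction with
  | empty => simpa using aux_zero_mul H a
  | cons i t hi ih => rw [Finset.sum_cons, Finset.sum_cons, H.add_mul', ih]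

/-- In an alternative algebra, if `x` and `y` anticommute then `x(yb) = -(y(xb))`. -/
lemma aux_swap (H : IsAltStarAlg A conj) (x y b : A)
    (hxy : x * y + y * x = 0) : x * (y * b) = -(y * (x * b)) := by
  have hL : (x + y) * ((x + y) * b)
      = x * (x * b) + (x * (y * b) + (y * (x * b) + y * (y * b))) := by
    rw [H.add_mul' x y b, H.add_mul' x y (x * b + y * b),
      H.mul_add' x (x * b) (y * b), H.mul_add' y (x * b) (y * b)]
    abel
  have hR : (x + y) * ((x + y) * b)
      = x * (x * b) + ((x * y) * b + ((y * x) * b + y * (y * b))) := by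
    rw [H.alt_left (x + y) b, H.mul_add' (x + y) x y, H.add_mul' x y x,
      H.add_mul' x y y, H.add_mul' (x * x + y * x) (x * y + y * y) b,
      H.add_mul' (x * x) (y * x) b, H.add_mul' (x * y) (y * y) b,
      ← H.alt_left x b, ← H.alt_left y b]
    abel
  have h2 := hL.symm.trans hR
  have h3 := add_left_cancel h2
  rw [← add_assoc, ← add_assoc] at h3
  have h4 := add_right_cancel h3
  have hxy' : (x * y) * b + (y * x) * b = 0 := by
    rw [← H.add_mul', hxy, aux_zero_mul H]
  exact eq_neg_of_add_eq_zero_left (h4.trans hxy')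

/-- For `1 ≤ s ≤ p < m` and `w ∈ Sph`, `v s` anticommutes with `ω = emb v m w`. -/
lemma aux_anticomm_omega (H : IsAltStarAlg A conj) (v : ℕ → A) (m p : ℕ)
    (hv : IsHypBasis A conj v m) (hp : p < m) (s : ℕ) (hs1 : 1 ≤ s) (hsp : s ≤ p)
    (w : Fin (m + 1) → ℝ) (hw : w ∈ Sph v m p) :
    v s * emb v m w + emb v m w * v s = 0 := by
  rw [emb, aux_mul_sum H, aux_sum_mul H, ← Finset.sum_add_distrib]
  refine Finset.sum_eq_zero fun t _ => ?_
  rw [H.mul_smul', H.smul_mul', ← smul_add]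
  by_cases ht : (t : ℕ) ≤ p
  · rw [hw.1 t ht, zero_smul]
  · push_neg at ht
    have h1t : 1 ≤ (t : ℕ) := le_trans (Nat.one_le_iff_ne_zero.mpr (by omega)) le_rfl
    have htm : (t : ℕ) ≤ m := Nat.lt_succ_iff.mp t.isLt
    have hne : s ≠ (t : ℕ) := by omega
    rw [hv.anticomm s t hs1 (by omega) h1t htm hne, neg_add_cancel, smul_zero]

end Aux

/-- For `a ∈ ℝ^{p+1} = span(v₀,…,v_p)`, `ω ∈ 𝕊` and `b ∈ 𝔸`:
`a(ωb) = ω(a^c b)`. -/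
theorem a_omega_b
    {A : Type*} [NormedAddCommGroup A] [NormedSpace ℝ A] [Mul A] [One A]
    (conj : A → A) (H : IsAltStarAlg A conj)
    (v : ℕ → A) (m p : ℕ) (hv : IsHypBasis A conj v m) (hp : p < m)
    (a : A) (ha : a ∈ Submodule.span ℝ (v '' Set.Iic p))
    (w : Fin (m + 1) → ℝ) (hw : w ∈ Sph v m p) (b : A) :
    a * (emb v m w * b) = emb v m w * (conj a * b) := by
  induction ha using Submodule.span_induction with
  | mem x hx =>
    obtain ⟨s, hs, rfl⟩ := hx
    rcases Nat.eq_zero_or_pos s with h0 | h1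
    · subst h0
      rw [hv.v_zero, H.conj_one, H.one_mul', H.one_mul']
    · have hsp : s ≤ p := hs
      have hconj : conj (v s) = -(v s) :=
        eq_neg_of_add_eq_zero_right (hv.trace_zero s h1 (by omega))
      rw [hconj, aux_neg_mul H, aux_mul_neg H]
      exact aux_swap H (v s) (emb v m w) b
        (aux_anticomm_omega H v m p hv hp s h1 hsp w hw)
  | zero =>
    have hc0 : conj (0 : A) = 0 := by
      have := H.conj_smul 0 (1 : A)
      simpa using this
    rw [aux_zero_mul H, hc0, aux_zero_mul H, aux_mul_zero H]
  | add x y hx hy ihx ihy =>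
    rw [H.add_mul', H.conj_add, H.add_mul', H.mul_add', ihx, ihy]
  | smul r x hx ih =>
    rw [H.smul_mul', H.conj_smul, H.smul_mul', H.mul_smul', ih]

end GPSM
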